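/- arXiv:2312.17327 — 2 statements merged into one kernel-verified Lean document; each statement's English description precedes it below -/
import Mathlib

section
/- A strongly connected digraph is a cactus digraph if and only if any two distinct simple cycles share at most one vertex. -/
structure DirGraph (V : Type) where
  Adj : V → V → Prop
  loopless : ∀ v, ¬ Adj v v

namespace DirGraph

variable {V V' : Type}

/-- A walk is a nonempty list of vertices with consecutive arcs. -/
def IsWalk (G : DirGraph V) : List V → Prop
  | [] => False
  | [_] => True
  | a :: b :: l => G.Adj a b ∧ G.IsWalk (b :: l)

def IsWalkFromTo (G : DirGraph V) (p : List V) (x y : V) : Prop :=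
  G.IsWalk p ∧ p.head? = some x ∧ p.getLast? = some y

def StronglyConnected (G : DirGraph V) : Prop :=
  ∀ x y : V, ∃ p, G.IsWalkFromTo p x y

def IsSimplePath (G : DirGraph V) (p : List V) : Prop :=
  G.IsWalk p ∧ p.Nodup

def IsSimplePathFromTo (G : DirGraph V) (p : List V) (x y : V) : Prop :=
  G.IsSimplePath p ∧ p.head? = some x ∧ p.getLast? = some y

/-- The arcs of a walk given as a list of vertices. -/
def arcs (p : List V) : List (V × V) := p.zip p.tail

/-- The preterminal (second-to-last) vertex of a path. -/
def preterminal (p : List V) : Option V := p.dropLast.getLast?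

/-- A simple cycle: a closed walk whose vertices are distinct except for the
repeated endpoint. -/
def IsSimpleCycle (G : DirGraph V) (p : List V) : Prop :=
  G.IsWalk p ∧ 2 ≤ p.length ∧ p.head? = p.getLast? ∧ p.dropLast.Nodup

/-- Two cycles are equal as cycles when they have the same set of arcs. -/
def CycleEquiv (p q : List V) : Prop :=
  ∀ a : V × V, a ∈ arcs p ↔ a ∈ arcs q

/-- Each arc lies in exactly one simple cycle (up to arc-set equality). -/
def CactusArcCond (G : DirGraph V) : Prop :=
  ∀ x y, G.Adj x y →
    (∃ p, G.IsSimpleCycle p ∧ (x, y) ∈ arcs p) ∧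
    (∀ p q, G.IsSimpleCycle p → (x, y) ∈ arcs p →
      G.IsSimpleCycle q → (x, y) ∈ arcs q → CycleEquiv p q)

/-- A cactus digraph: strongly connected and each arc lies in exactly one
simple cycle. -/
def IsCactus (G : DirGraph V) : Prop :=
  G.StronglyConnected ∧ G.CactusArcCond

noncomputable def inDeg (G : DirGraph V) (v : V) : ℕ := Nat.card {u // G.Adj u v}
noncomputable def outDeg (G : DirGraph V) (v : V) : ℕ := Nat.card {u // G.Adj v u}

/-- A connecting point: a vertex shared by two distinct simple cycles. -/
def IsConnectingPoint (G : DirGraph V) (v : V) : Prop :=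
  ∃ p q, G.IsSimpleCycle p ∧ G.IsSimpleCycle q ∧ ¬ CycleEquiv p q ∧ v ∈ p ∧ v ∈ q

/-- An expansion of digraphs. -/
structure IsExpansion (G' : DirGraph V') (G : DirGraph V) (φ : V' → V) : Prop where
  map_adj : ∀ ⦃x y⦄, G'.Adj x y → G.Adj (φ x) (φ y)
  vert_surj : Function.Surjective φ
  arc_surj : ∀ ⦃x y⦄, G.Adj x y → ∃ x' y', G'.Adj x' y' ∧ φ x' = x ∧ φ y' = y
  lift : ∀ ⦃x y⦄, G.Adj x y → ∀ y', φ y' = y → ∃! x', G'.Adj x' y' ∧ φ x' = x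

/-- A doubly bidirectionally connected pair. -/
def Dbcp (G : DirGraph V) (p q : V) : Prop :=
  p ≠ q ∧
  (∃ P Q, G.IsSimplePathFromTo P p q ∧ G.IsSimplePathFromTo Q p q ∧
    preterminal P ≠ preterminal Q) ∧
  (∃ P Q, G.IsSimplePathFromTo P q p ∧ G.IsSimplePathFromTo Q q p ∧
    preterminal P ≠ preterminal Q)

/-- Subgraph of a digraph: a vertex subset together with a subrelation of arcs
supported on it. -/
structure Subgraph (G : DirGraph V) where
  verts : Set V
  Adj : V → V → Prop
  adj_sub : ∀ ⦃x y⦄, Adj x y → G.Adj x y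
  mem_left : ∀ ⦃x y⦄, Adj x y → x ∈ verts
  mem_right : ∀ ⦃x y⦄, Adj x y → y ∈ verts

def Subgraph.toDirGraph {G : DirGraph V} (H : Subgraph G) : DirGraph V :=
  ⟨H.Adj, fun v h => G.loopless v (H.adj_sub h)⟩

/-- A sub-cactus digraph: a nonempty subgraph that is strongly connected (on
its vertex set) and in which each arc lies in exactly one simple cycle. -/
def Subgraph.IsCactus {G : DirGraph V} (H : Subgraph G) : Prop :=
  H.verts.Nonempty ∧
  (∀ x ∈ H.verts, ∀ y ∈ H.verts, ∃ p, H.toDirGraph.IsWalkFromTo p x y) ∧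
  H.toDirGraph.CactusArcCond

def Subgraph.inter {G : DirGraph V} (H K : Subgraph G) : Subgraph G where
  verts := H.verts ∩ K.verts
  Adj x y := H.Adj x y ∧ K.Adj x y
  adj_sub := fun _ _ h => H.adj_sub h.1
  mem_left := fun _ _ h => ⟨H.mem_left h.1, K.mem_left h.2⟩
  mem_right := fun _ _ h => ⟨H.mem_right h.1, K.mem_right h.2⟩

def Subgraph.le {G : DirGraph V} (H K : Subgraph G) : Prop :=
  H.verts ⊆ K.verts ∧ ∀ ⦃x y⦄, H.Adj x y → K.Adj x y

/-- The single-vertex subgraph. -/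
def singleVert (G : DirGraph V) (v : V) : Subgraph G where
  verts := {v}
  Adj _ _ := False
  adj_sub := by intro _ _ h; exact h.elim
  mem_left := by intro _ _ h; exact h.elim
  mem_right := by intro _ _ h; exact h.elim

/-- The intersection of all sub-cactus digraphs of `G` containing `W`. -/
def CsubOf (G : DirGraph V) (W : Set V) : Subgraph G where
  verts := {x | ∀ H : Subgraph G, H.IsCactus → W ⊆ H.verts → x ∈ H.verts}
  Adj x y := G.Adj x y ∧ ∀ H : Subgraph G, H.IsCactus → W ⊆ H.verts → H.Adj x y
  adj_sub := fun _ _ h => h.1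
  mem_left := fun _ _ h H hH hW => H.mem_left (h.2 H hH hW)
  mem_right := fun _ _ h H hH hW => H.mem_right (h.2 H hH hW)

open Classical in
/-- `C G r v`: the minimum sub-cactus digraph containing `{r, v}` (and the
single vertex `{r}` when `v = r`). -/
noncomputable def C (G : DirGraph V) (r v : V) : Subgraph G :=
  if v = r then singleVert G r else CsubOf G {r, v}

/-- The preorder on vertices of the rooted cactus digraph `(G, r)`:
`v ≼ w ↔ C(v) ⊆ C(w)`. -/
def pre (G : DirGraph V) (r v w : V) : Prop :=
  Subgraph.le (C G r v) (C G r w)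

end DirGraph

/-!
If every arc lies in a unique simple cycle, two distinct simple cycles `p`, `q` are arc-disjoint.
Were they to share vertices `x ≠ y`, say with `x` before `y` on `p`, follow `p` from `x` to `y`
and `q` back from `y` to `x`, and shorten this closed walk to a simple cycle through the first arc
of the `p`-segment. That cycle must be `p`, yet the arc by which it re-enters `x` does not lie on
the `p`-segment, so it is an arc of `q` as well.

Conversely, strong connectivity closes each arc `(x, y)` with a simple path from `y` to `x` into a
simple cycle, and two distinct simple cycles through `(x, y)` would share both `x` and `y`.
-/

namespace List

variable {α : Type*} {r : α → α → Prop} {a b : α}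

theorem exists_isChain_cons_nodup_of_relationReflTransGen (h : Relation.ReflTransGen r a b) :
    ∃ l, IsChain r (a :: l) ∧ (a :: l).getLast (cons_ne_nil _ _) = b ∧ (a :: l).Nodup := by
  induction h using Relation.ReflTransGen.head_induction_on with
  | refl => exact ⟨[], .singleton _, rfl, nodup_singleton _⟩
  | @head a c hac _ ih =>
    obtain ⟨l, hch, hlast, hnd⟩ := ih
    by_cases ha : a ∈ c :: l
    · -- `a` recurs further down the chain: drop the detour
      obtain ⟨s, t, hst⟩ := append_of_mem ha
      have hsuf : a :: t <:+ c :: l := ⟨s, hst.symm⟩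
      refine ⟨t, hch.suffix hsuf, ?_, hnd.sublist hsuf.sublist⟩
      rw [← hlast]; simp [hst]
    · exact ⟨c :: l, hch.cons (by simpa using hac), by simpa using hlast, nodup_cons.2 ⟨ha, hnd⟩⟩

theorem IsChain.relationReflTransGen_of_mem_cons {l : List α} (hl : IsChain r (a :: l))
    (hb : b ∈ a :: l) : Relation.ReflTransGen r a b := by
  induction l generalizing a with
  | nil => obtain rfl := mem_singleton.1 hb; rfl
  | cons c l ih =>
    rw [isChain_cons_cons] at hl
    rcases mem_cons.1 hb with rfl | hb
    · rfl
    · exact .head hl.1 (ih hl.2 hb)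

theorem IsChain.relationReflTransGen_getLast {l : List α} (hl : IsChain r l) (ha : a ∈ l) :
    Relation.ReflTransGen r a (l.getLast (ne_nil_of_mem ha)) := by
  obtain ⟨s, t, rfl⟩ := append_of_mem ha
  rw [getLast_append_right (cons_ne_nil _ _)]
  exact relationReflTransGen_of_exists_isChain _ (hl.suffix (suffix_append _ _)) (cons_ne_nil _ _)

theorem IsChain.relationReflTransGen_of_head?_eq_getLast? {l : List α} (hl : IsChain r l)
    (hc : l.head? = l.getLast?) (ha : a ∈ l) (hb : b ∈ l) : Relation.ReflTransGen r a b := by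
  obtain ⟨c, l', rfl⟩ := exists_cons_of_ne_nil (ne_nil_of_mem ha)
  refine (hl.relationReflTransGen_getLast ha).trans ?_
  have hlast : (c :: l').getLast (cons_ne_nil _ _) = c := by
    rw [← Option.some_inj, ← getLast?_eq_some_getLast, ← hc, head?_cons]
  rw [hlast]
  exact hl.relationReflTransGen_of_mem_cons hb

theorem exists_infix_of_mem_of_mem {l : List α} (ha : a ∈ l) (hb : b ∈ l) (hab : a ≠ b) :
    ∃ m, a :: (m ++ [b]) <:+: l ∨ b :: (m ++ [a]) <:+: l := by
  obtain ⟨s, r, rfl⟩ := append_of_mem ha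
  rcases mem_append.1 hb with hb | hb
  · obtain ⟨s', m, rfl⟩ := append_of_mem hb
    exact ⟨m, .inr ⟨s', r, by simp⟩⟩
  · obtain ⟨m, t, rfl⟩ := append_of_mem ((mem_cons.1 hb).resolve_left hab.symm)
    exact ⟨m, .inl ⟨s, t, by simp⟩⟩

end List

namespace DirGraph

variable {V : Type} {G : DirGraph V}

open List Relation

theorem Adj.ne {x y : V} (h : G.Adj x y) : x ≠ y := by
  rintro rfl; exact G.loopless x h

theorem isWalk_iff_isChain {p : List V} : G.IsWalk p ↔ p ≠ [] ∧ p.IsChain G.Adj := by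
  induction p using List.twoStepInduction with
  | nil => simp [IsWalk]
  | singleton => simp [IsWalk]
  | cons_cons a b l _ ih => simp [IsWalk, ih]

theorem mem_arcs_iff_infix {l : List V} {a b : V} : (a, b) ∈ arcs l ↔ [a, b] <:+: l := by
  induction l using List.twoStepInduction with
  | nil => simp [arcs]
  | singleton c => simpa [arcs] using fun h => by simpa using h.length_le
  | cons_cons c d l _ ih =>
    rw [infix_cons_iff, ← ih]
    simp [arcs]

theorem mem_of_mem_arcs {l : List V} {a b : V} (h : (a, b) ∈ arcs l) : a ∈ l ∧ b ∈ l :=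
  let h := mem_arcs_iff_infix.1 h
  ⟨h.subset (by simp), h.subset (by simp)⟩

theorem IsWalk.adj_of_mem_arcs {p : List V} (hp : G.IsWalk p) {a b : V} (h : (a, b) ∈ arcs p) :
    G.Adj a b :=
  isChain_pair.1 ((isWalk_iff_isChain.1 hp).2.infix (mem_arcs_iff_infix.1 h))

theorem IsWalkFromTo.reflTransGen {w : List V} {x y : V} (hw : G.IsWalkFromTo w x y) :
    ReflTransGen G.Adj x y := by
  obtain ⟨hw, hx, hy⟩ := hw
  obtain ⟨hne, hch⟩ := isWalk_iff_isChain.1 hw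
  rw [head?_eq_some_head hne, Option.some_inj] at hx
  rw [getLast?_eq_some_getLast hne, Option.some_inj] at hy
  exact hx ▸ hy ▸ relationReflTransGen_of_exists_isChain w hch hne

theorem IsSimpleCycle.mem_dropLast {p : List V} (hp : G.IsSimpleCycle p) {v : V} (hv : v ∈ p) :
    v ∈ p.dropLast := by
  obtain ⟨-, hlen, hhl, -⟩ := hp
  rw [← dropLast_concat_getLast (ne_nil_of_mem hv), mem_append, mem_singleton] at hv
  rcases hv with hv | hv
  · exact hv
  · rw [hv]
    apply mem_of_mem_head?
    rw [head?_dropLast, if_pos (by omega), hhl, getLast?_eq_some_getLast]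
    rfl

/-- The cycle is `x` followed by a shortest `R`-path from `y` to `x`. -/
theorem exists_isSimpleCycle_of_reflTransGen {R : V → V → Prop}
    (hR : ∀ ⦃a b⦄, R a b → G.Adj a b) {x y : V} (hxy : G.Adj x y) (h : ReflTransGen R y x) :
    ∃ D, G.IsSimpleCycle D ∧ (x, y) ∈ arcs D ∧ ∃ u, R u x ∧ (u, x) ∈ arcs D := by
  obtain ⟨l, hch, hlast, hnd⟩ := exists_isChain_cons_nodup_of_relationReflTransGen h
  obtain ⟨m, u, hmu⟩ : ∃ m u, (y :: l).dropLast = m ++ [u] := by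
    refine ⟨_, _, (dropLast_concat_getLast ?_).symm⟩
    intro hnil
    obtain rfl : l = [] := by simpa using congrArg length hnil
    exact hxy.ne hlast.symm
  have hyl : y :: l = m ++ [u, x] := by
    rw [← dropLast_concat_getLast (cons_ne_nil y l), hmu, hlast]; simp
  have hxl : x ∉ (y :: l).dropLast := by
    rw [hyl, show m ++ [u, x] = (m ++ [u]) ++ [x] by simp, nodup_append] at hnd
    rw [hmu]
    exact fun hx => hnd.2.2 x hx x (mem_singleton_self x) rfl
  have hux : [u, x] <:+: y :: l := hyl ▸ (suffix_append m [u, x]).isInfix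
  refine ⟨x :: y :: l, ⟨?_, by simp, ?_, ?_⟩, ?_, u, ?_, ?_⟩
  · exact isWalk_iff_isChain.2 ⟨cons_ne_nil _ _, (hch.imp hR).cons (by simpa using hxy)⟩
  · simp [getLast?_eq_some_getLast, hlast]
  · rw [dropLast_cons_cons]; exact nodup_cons.2 ⟨hxl, hnd.sublist (dropLast_sublist _)⟩
  · exact mem_arcs_iff_infix.2 (prefix_append [x, y] l).isInfix
  · exact isChain_pair.1 (hch.infix hux)
  · exact mem_arcs_iff_infix.2 (hux.trans (suffix_cons _ _).isInfix)

theorem exists_isSimpleCycle_mem_arcs (hG : G.StronglyConnected) {x y : V} (hxy : G.Adj x y) :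
    ∃ p, G.IsSimpleCycle p ∧ (x, y) ∈ arcs p :=
  let ⟨_, hw⟩ := hG y x
  let ⟨D, hD, hxyD, _⟩ := exists_isSimpleCycle_of_reflTransGen (fun _ _ => id) hxy hw.reflTransGen
  ⟨D, hD, hxyD⟩

theorem CactusArcCond.cycleEquiv_of_infix (hC : G.CactusArcCond) {p q : List V}
    (hp : G.IsSimpleCycle p) (hq : G.IsSimpleCycle q) {x y : V} {m : List V}
    (hseg : x :: (m ++ [y]) <:+: p.dropLast) (hx : x ∈ q) (hy : y ∈ q) : CycleEquiv p q := by
  by_contra hpq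
  have hdisj : ∀ a b, (a, b) ∈ arcs p → (a, b) ∉ arcs q := fun a b hab hab' =>
    hpq ((hC a b (hp.1.adj_of_mem_arcs hab)).2 p q hp hab hq hab')
  obtain ⟨h, m', hm'⟩ := exists_cons_of_ne_nil (show m ++ [y] ≠ [] by simp)
  have hsegp : x :: (m ++ [y]) <:+: p := hseg.trans (dropLast_prefix p).isInfix
  let R : V → V → Prop := fun a b => [a, b] <:+: m ++ [y] ∨ (a, b) ∈ arcs q
  have hRadj : ∀ ⦃a b⦄, R a b → G.Adj a b := by
    rintro a b (hab | hab)
    · exact hp.1.adj_of_mem_arcs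
        (mem_arcs_iff_infix.2 (hab.trans ((suffix_cons x _).isInfix.trans hsegp)))
    · exact hq.1.adj_of_mem_arcs hab
  have hxh : (x, h) ∈ arcs p := by
    rw [mem_arcs_iff_infix]
    refine IsInfix.trans ?_ hsegp
    rw [hm']
    exact (prefix_append [x, h] m').isInfix
  have hhy : ReflTransGen R h y := by
    have hch : IsChain R (m ++ [y]) := (isChain_isInfix _).imp fun _ _ => Or.inl
    rw [hm'] at hch
    exact hch.relationReflTransGen_of_mem_cons (hm' ▸ mem_append_right _ (mem_singleton_self y))
  have hyx : ReflTransGen R y x := by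
    have hch : IsChain R q :=
      (isChain_isInfix q).imp fun _ _ hab => .inr (mem_arcs_iff_infix.2 hab)
    exact hch.relationReflTransGen_of_head?_eq_getLast? hq.2.2.1 hy hx
  obtain ⟨D, hD, hxhD, u, hux, huxD⟩ :=
    exists_isSimpleCycle_of_reflTransGen hRadj (hp.1.adj_of_mem_arcs hxh) (hhy.trans hyx)
  have hDp : CycleEquiv D p := (hC x h (hp.1.adj_of_mem_arcs hxh)).2 D p hD hxhD hp hxh
  rcases hux with hux | hux
  · exact (nodup_cons.1 (hp.2.2.2.sublist hseg.sublist)).1 (hux.subset (by simp))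
  · exact hdisj u x ((hDp _).1 huxD) hux

end DirGraph

/-- A strongly connected digraph is a cactus digraph iff any two distinct
simple cycles share at most one vertex. -/
theorem isCactus_iff_cycles_share_at_most_one_vertex {V : Type}
    (G : DirGraph V) (hG : G.StronglyConnected) :
    G.IsCactus ↔
      ∀ p q, G.IsSimpleCycle p → G.IsSimpleCycle q → ¬ DirGraph.CycleEquiv p q →
        ∀ x y, x ∈ p → x ∈ q → y ∈ p → y ∈ q → x = y := by
  constructor
  · rintro ⟨-, hC⟩ p q hp hq hpq x y hxp hxq hyp hyq
    by_contra hxy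
    obtain ⟨m, hseg | hseg⟩ :=
      List.exists_infix_of_mem_of_mem (hp.mem_dropLast hxp) (hp.mem_dropLast hyp) hxy
    · exact hpq (hC.cycleEquiv_of_infix hp hq hseg hxq hyq)
    · exact hpq (hC.cycleEquiv_of_infix hp hq hseg hyq hxq)
  · refine fun h => ⟨hG, fun x y hxy => ⟨DirGraph.exists_isSimpleCycle_mem_arcs hG hxy, ?_⟩⟩
    intro p q hp hxyp hq hxyq
    by_contra hpq
    obtain ⟨hxp, hyp⟩ := DirGraph.mem_of_mem_arcs hxyp
    obtain ⟨hxq, hyq⟩ := DirGraph.mem_of_mem_arcs hxyq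
    exact hxy.ne (h p q hp hq hpq x y hxp hxq hyp hyq)
end

section
/- In a cactus digraph, a vertex v is a connecting point (i.e., shared by two or more distinct simple cycles) if and only if δ⁻(v) = δ⁺(v) ≥ 2. -/
/-!
Under the cactus condition an arc `(u, v)` lies on a unique simple cycle, which leaves `v` by a
unique arc `(v, w)`; the relation "`u → v → w` lies on a simple cycle" is therefore the graph of a
bijection between the in-arcs and the out-arcs at `v`, so `v` is balanced. Two distinct cycles
through `v` enter `v` along distinct arcs, because an arc determines its cycle; conversely, two
in-arcs at `v` lie on distinct cycles, because a simple cycle enters each vertex only once.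
-/

namespace List

variable {α β : Type*} {a : α} {b c : β} {l₁ : List α} {l₂ : List β}

theorem eq_of_mem_zip_of_nodup_left (h : l₁.Nodup) (hb : (a, b) ∈ l₁.zip l₂)
    (hc : (a, c) ∈ l₁.zip l₂) : b = c := by
  induction l₁ generalizing l₂ with
  | nil => simp at hb
  | cons x l ih =>
    cases l₂ with
    | nil => simp at hb
    | cons y l₂ =>
      simp only [zip_cons_cons, mem_cons, Prod.mk.injEq, nodup_cons] at h hb hc
      rcases hb with ⟨rfl, rfl⟩ | hb
      · rcases hc with ⟨-, rfl⟩ | hc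
        · rfl
        · exact absurd (of_mem_zip hc).1 h.1
      · rcases hc with ⟨rfl, -⟩ | hc
        · exact absurd (of_mem_zip hb).1 h.1
        · exact ih h.2 hb hc

theorem mem_zip_swap (h : (a, b) ∈ l₁.zip l₂) : (b, a) ∈ l₂.zip l₁ := by
  rw [← zip_swap]
  exact mem_map_of_mem h

theorem eq_of_mem_zip_of_nodup_right (h : l₂.Nodup) (ha : (a, c) ∈ l₁.zip l₂)
    {a' : α} (ha' : (a', c) ∈ l₁.zip l₂) : a = a' :=
  eq_of_mem_zip_of_nodup_left h (mem_zip_swap ha) (mem_zip_swap ha')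

theorem exists_mem_zip_of_mem_left (hlen : l₁.length ≤ l₂.length) (ha : a ∈ l₁) :
    ∃ b, (a, b) ∈ l₁.zip l₂ := by
  obtain ⟨i, hi, rfl⟩ := getElem_of_mem ha
  have hi' : i < (l₁.zip l₂).length := by rw [length_zip]; omega
  exact ⟨l₂[i], by simpa using getElem_mem hi'⟩

theorem exists_mem_zip_of_mem_right (hlen : l₂.length ≤ l₁.length) (hb : b ∈ l₂) :
    ∃ a, (a, b) ∈ l₁.zip l₂ :=
  (exists_mem_zip_of_mem_left hlen hb).imp fun _ h => mem_zip_swap h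

end List

namespace Relator

theorem nat_card_eq_of_biTotal_of_biUnique {α β : Type*} {R : α → β → Prop}
    (htot : BiTotal R) (huniq : BiUnique R) : Nat.card α = Nat.card β := by
  choose f hf using htot.1
  choose g hg using htot.2
  exact Nat.card_congr
    { toFun := f
      invFun := g
      left_inv := fun a => huniq.1 (hg (f a)) (hf a)
      right_inv := fun b => huniq.2 (hf (g b)) (hg b) }

end Relator

namespace DirGraph

variable {V : Type} {G : DirGraph V}

theorem IsWalk.adj_of_mem_arcs_s6 : ∀ {p : List V}, G.IsWalk p → ∀ {x y : V},
    (x, y) ∈ arcs p → G.Adj x y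
  | [], h, _, _, _ => h.elim
  | [_], _, _, _, hm => by simp [arcs] at hm
  | a :: b :: l, h, _, _, hm => by
      simp only [arcs, List.tail_cons, List.zip_cons_cons, List.mem_cons,
        Prod.mk.injEq] at hm
      rcases hm with ⟨rfl, rfl⟩ | hm
      · exact h.1
      · exact IsWalk.adj_of_mem_arcs_s6 h.2 hm

theorem arcs_cons_append_singleton (a : V) (s : List V) :
    arcs (a :: (s ++ [a])) = (a :: s).zip (s ++ [a]) := by
  rw [arcs, List.tail_cons, ← List.cons_append,
    ← List.append_nil (s ++ [a]), List.zip_append (by simp)]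
  simp

namespace IsSimpleCycle

variable {p : List V}

theorem exists_eq_cons_append (hp : G.IsSimpleCycle p) :
    ∃ a s, p = a :: (s ++ [a]) ∧ (a :: s).Nodup := by
  obtain ⟨-, hlen, hends, hnd⟩ := hp
  obtain _ | ⟨a, t⟩ := p
  · simp at hlen
  have ht : t ≠ [] := by rintro rfl; simp at hlen
  have hlast : t.getLast ht = a := by
    simpa [List.getLast?_cons, List.getLast?_eq_some_getLast ht] using hends.symm
  refine ⟨a, t.dropLast, ?_, ?_⟩
  · rw [← hlast, List.dropLast_append_getLast ht]
  · rwa [List.dropLast_cons_of_ne_nil ht] at hnd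

theorem inArc_unique (hp : G.IsSimpleCycle p) {u₁ u₂ x : V}
    (h₁ : (u₁, x) ∈ arcs p) (h₂ : (u₂, x) ∈ arcs p) : u₁ = u₂ := by
  obtain ⟨a, s, rfl, hnd⟩ := hp.exists_eq_cons_append
  rw [arcs_cons_append_singleton] at h₁ h₂
  have hnd' : (s ++ [a]).Nodup := (List.perm_append_singleton a s).nodup_iff.2 hnd
  exact List.eq_of_mem_zip_of_nodup_right hnd' h₁ h₂

theorem outArc_unique (hp : G.IsSimpleCycle p) {w₁ w₂ x : V}
    (h₁ : (x, w₁) ∈ arcs p) (h₂ : (x, w₂) ∈ arcs p) : w₁ = w₂ := by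
  obtain ⟨a, s, rfl, hnd⟩ := hp.exists_eq_cons_append
  rw [arcs_cons_append_singleton] at h₁ h₂
  exact List.eq_of_mem_zip_of_nodup_left hnd h₁ h₂

theorem exists_inArc (hp : G.IsSimpleCycle p) {x : V} (hx : x ∈ p) :
    ∃ u, (u, x) ∈ arcs p := by
  obtain ⟨a, s, rfl, -⟩ := hp.exists_eq_cons_append
  rw [arcs_cons_append_singleton]
  exact List.exists_mem_zip_of_mem_right (by simp)
    (by simp only [List.mem_cons, List.mem_append] at hx ⊢; tauto)

theorem exists_outArc (hp : G.IsSimpleCycle p) {x : V} (hx : x ∈ p) :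
    ∃ w, (x, w) ∈ arcs p := by
  obtain ⟨a, s, rfl, -⟩ := hp.exists_eq_cons_append
  rw [arcs_cons_append_singleton]
  exact List.exists_mem_zip_of_mem_left (by simp)
    (by simp only [List.mem_cons, List.mem_append] at hx ⊢; tauto)

end IsSimpleCycle

theorem mem_of_mem_arcs_left {p : List V} {x y : V} (h : (x, y) ∈ arcs p) : x ∈ p :=
  (List.of_mem_zip h).1

theorem mem_of_mem_arcs_right {p : List V} {x y : V} (h : (x, y) ∈ arcs p) : y ∈ p :=
  List.mem_of_mem_tail (List.of_mem_zip h).2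

def IsCycleSegment (G : DirGraph V) (u v w : V) : Prop :=
  ∃ p, G.IsSimpleCycle p ∧ (u, v) ∈ arcs p ∧ (v, w) ∈ arcs p

namespace CactusArcCond

variable (hG : G.CactusArcCond)
include hG

theorem mem_arcs_of_mem_arcs {p q : List V} (hp : G.IsSimpleCycle p) (hq : G.IsSimpleCycle q)
    {e f : V × V} (hep : e ∈ arcs p) (heq : e ∈ arcs q) (hf : f ∈ arcs q) : f ∈ arcs p :=
  ((hG e.1 e.2 (hp.1.adj_of_mem_arcs_s6 hep)).2 p q hp hep hq heq f).2 hf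

theorem exists_isCycleSegment_of_adj_in {u v : V} (h : G.Adj u v) :
    ∃ w, G.IsCycleSegment u v w := by
  obtain ⟨p, hp, hup⟩ := (hG u v h).1
  obtain ⟨w, hvw⟩ := hp.exists_outArc (mem_of_mem_arcs_right hup)
  exact ⟨w, p, hp, hup, hvw⟩

theorem exists_isCycleSegment_of_adj_out {v w : V} (h : G.Adj v w) :
    ∃ u, G.IsCycleSegment u v w := by
  obtain ⟨p, hp, hvw⟩ := (hG v w h).1
  obtain ⟨u, huv⟩ := hp.exists_inArc (mem_of_mem_arcs_left hvw)
  exact ⟨u, p, hp, huv, hvw⟩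

theorem isCycleSegment_left_unique {u₁ u₂ v w : V} (h₁ : G.IsCycleSegment u₁ v w)
    (h₂ : G.IsCycleSegment u₂ v w) : u₁ = u₂ := by
  obtain ⟨p, hp, hp₁, hp₂⟩ := h₁
  obtain ⟨q, hq, hq₁, hq₂⟩ := h₂
  exact hp.inArc_unique hp₁ (hG.mem_arcs_of_mem_arcs hp hq hp₂ hq₂ hq₁)

theorem isCycleSegment_right_unique {u v w₁ w₂ : V} (h₁ : G.IsCycleSegment u v w₁)
    (h₂ : G.IsCycleSegment u v w₂) : w₁ = w₂ := by
  obtain ⟨p, hp, hp₁, hp₂⟩ := h₁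
  obtain ⟨q, hq, hq₁, hq₂⟩ := h₂
  exact hp.outArc_unique hp₂ (hG.mem_arcs_of_mem_arcs hp hq hp₁ hq₁ hq₂)

theorem inDeg_eq_outDeg (v : V) : G.inDeg v = G.outDeg v := by
  refine Relator.nat_card_eq_of_biTotal_of_biUnique
    (R := fun (u : {u // G.Adj u v}) (w : {w // G.Adj v w}) => G.IsCycleSegment u v w)
    ⟨fun u => ?_, fun w => ?_⟩
    ⟨fun _ _ _ h₁ h₂ => Subtype.ext (hG.isCycleSegment_left_unique h₁ h₂),
      fun _ _ _ h₁ h₂ => Subtype.ext (hG.isCycleSegment_right_unique h₁ h₂)⟩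
  · obtain ⟨w, p, hp, hup, hvw⟩ := hG.exists_isCycleSegment_of_adj_in u.2
    exact ⟨⟨w, hp.1.adj_of_mem_arcs_s6 hvw⟩, p, hp, hup, hvw⟩
  · obtain ⟨u, p, hp, hup, hvw⟩ := hG.exists_isCycleSegment_of_adj_out w.2
    exact ⟨⟨u, hp.1.adj_of_mem_arcs_s6 hup⟩, p, hp, hup, hvw⟩

theorem isConnectingPoint_iff {v : V} :
    G.IsConnectingPoint v ↔ ∃ u₁ u₂, u₁ ≠ u₂ ∧ G.Adj u₁ v ∧ G.Adj u₂ v := by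
  constructor
  · rintro ⟨p, q, hp, hq, hpq, hvp, hvq⟩
    obtain ⟨u₁, h₁⟩ := hp.exists_inArc hvp
    obtain ⟨u₂, h₂⟩ := hq.exists_inArc hvq
    refine ⟨u₁, u₂, ?_, hp.1.adj_of_mem_arcs_s6 h₁, hq.1.adj_of_mem_arcs_s6 h₂⟩
    rintro rfl
    exact hpq ((hG u₁ v (hp.1.adj_of_mem_arcs_s6 h₁)).2 p q hp h₁ hq h₂)
  · rintro ⟨u₁, u₂, hne, h₁, h₂⟩
    obtain ⟨p, hp, hup⟩ := (hG u₁ v h₁).1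
    obtain ⟨q, hq, huq⟩ := (hG u₂ v h₂).1
    refine ⟨p, q, hp, hq, fun hpq => hne ?_, mem_of_mem_arcs_right hup,
      mem_of_mem_arcs_right huq⟩
    exact hp.inArc_unique hup ((hpq _).2 huq)

end CactusArcCond

theorem two_le_inDeg_iff [Finite V] {v : V} :
    2 ≤ G.inDeg v ↔ ∃ u₁ u₂, u₁ ≠ u₂ ∧ G.Adj u₁ v ∧ G.Adj u₂ v := by
  rw [inDeg, Nat.succ_le_iff, Finite.one_lt_card_iff_nontrivial, nontrivial_iff]
  simp only [ne_eq, Subtype.exists, Subtype.mk.injEq, exists_prop]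
  grind

end DirGraph

/-- In a cactus digraph, `v` is a connecting point iff `δ⁻(v) = δ⁺(v) ≥ 2`. -/
theorem connectingPoint_iff_degree_ge_two {V : Type} [Finite V]
    (G : DirGraph V) (hG : G.IsCactus) (v : V) :
    G.IsConnectingPoint v ↔ (G.inDeg v = G.outDeg v ∧ 2 ≤ G.inDeg v) := by
  rw [hG.2.isConnectingPoint_iff, DirGraph.two_le_inDeg_iff, hG.2.inDeg_eq_outDeg]
  exact (and_iff_right rfl).symm
end
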